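/- arXiv:2105.05450 — 2 statements merged into one kernel-verified Lean document; each statement's English description precedes it below -/
import Mathlib

section
/- (Halanay-type Razumikhin lemma) Let V : ℝ → ℝ≥0 be continuous, Δ > 0, μ ≥ 0, and γ > η > 0. Suppose that for all t ≥ 0 the upper right Dini derivative satisfies D⁺V(t) ≤ -γ·V(t) + η·sup_{θ∈[-Δ,0]} e^{μθ}·V(t+θ). Let ρ ∈ (0, ρ̄), where ρ̄ > 0 is the unique positive root of ρ - γ + η·e^{Δρ} = 0, and assume ρ ≤ μ. If V(θ) ≤ V(0) for all θ ∈ [-Δ, 0], then V(t) ≤ e^{-ρt}·V(0) for all t ≥ 0. -/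
open Set Filter

/-- Upper right Dini derivative. -/
noncomputable def diniPlus (V : ℝ → ℝ) (t : ℝ) : ℝ :=
  limsup (fun s => (V (t + s) - V t) / s) (nhdsWithin 0 (Set.Ioi 0))

set_option maxHeartbeats 1600000 in
theorem stmt_2 (V : ℝ → ℝ) (Δ μ γ η ρ ρbar : ℝ)
    (hΔ : 0 < Δ) (hμ : 0 ≤ μ) (hη : 0 < η) (hγ : η < γ)
    (hVcont : Continuous V)
    (hVnonneg : ∀ t, -Δ ≤ t → 0 ≤ V t)
    (hρbar : 0 < ρbar) (hroot : ρbar - γ + η * Real.exp (Δ * ρbar) = 0)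
    (hρ : ρ ∈ Set.Ioo 0 ρbar) (hρμ : ρ ≤ μ)
    (hdini : ∀ t, 0 ≤ t →
      diniPlus V t ≤ -γ * V t +
        η * sSup ((fun θ => Real.exp (μ * θ) * V (t + θ)) '' Set.Icc (-Δ) 0))
    (hinit : ∀ θ ∈ Set.Icc (-Δ) 0, V θ ≤ V 0) :
    ∀ t, 0 ≤ t → V t ≤ Real.exp (-ρ * t) * V 0 := by
  have hρ0 : 0 < ρ := hρ.1
  have hρlt : ρ < γ - η := by
    have h2 := Real.add_one_le_exp (Δ * ρbar)
    nlinarith [hρ.2, mul_pos hΔ hρbar]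
  set c := V 0 with hc
  have hc0 : 0 ≤ c := hVnonneg 0 (by linarith)
  have key : ∀ ε : ℝ, 0 < ε → ∀ t, 0 ≤ t → V t ≤ (c + ε) * Real.exp (-ρ * t) := by
    intro ε hε
    by_contra h
    push_neg at h
    obtain ⟨t1, ht1, hVt1⟩ := h
    set S := {t : ℝ | 0 ≤ t ∧ (c + ε) * Real.exp (-ρ * t) < V t} with hS
    have hSne : S.Nonempty := ⟨t1, ht1, hVt1⟩
    have hSbd : BddBelow S := ⟨0, fun t ht => ht.1⟩
    set t₀ := sInf S with ht₀
    have ht₀0 : 0 ≤ t₀ := le_csInf hSne fun t ht => ht.1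
    have hcontf : Continuous fun t : ℝ => (c + ε) * Real.exp (-ρ * t) := by
      continuity
    -- t₀ is in the closure of S, hence satisfies the closed inequality
    have ht₀ge : (c + ε) * Real.exp (-ρ * t₀) ≤ V t₀ := by
      have hcl : IsClosed {t : ℝ | (c + ε) * Real.exp (-ρ * t) ≤ V t} :=
        isClosed_le hcontf hVcont
      have hsub : S ⊆ {t : ℝ | (c + ε) * Real.exp (-ρ * t) ≤ V t} :=
        fun t ht => le_of_lt ht.2
      have := csInf_mem_closure hSne hSbd
      exact (hcl.closure_subset_iff.mpr hsub) this
    have ht₀pos : 0 < t₀ := by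
      rcases lt_or_eq_of_le ht₀0 with h | h
      · exact h
      · exfalso
        rw [← h] at ht₀ge
        simp [Real.exp_zero] at ht₀ge
        linarith
    have hbefore : ∀ s, 0 ≤ s → s < t₀ → V s ≤ (c + ε) * Real.exp (-ρ * s) := by
      intro s hs hst
      by_contra h'
      push_neg at h'
      exact absurd (csInf_le hSbd ⟨hs, h'⟩) (not_le.mpr hst)
    -- V t₀ = (c+ε) exp(-ρ t₀)
    have ht₀le : V t₀ ≤ (c + ε) * Real.exp (-ρ * t₀) := by
      have l1 : Tendsto V (nhdsWithin t₀ (Set.Iio t₀)) (nhds (V t₀)) :=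
        (hVcont.tendsto t₀).mono_left nhdsWithin_le_nhds
      have l2 : Tendsto (fun t => (c + ε) * Real.exp (-ρ * t))
          (nhdsWithin t₀ (Set.Iio t₀)) (nhds ((c + ε) * Real.exp (-ρ * t₀))) :=
        (hcontf.tendsto t₀).mono_left nhdsWithin_le_nhds
      refine le_of_tendsto_of_tendsto l1 l2 ?_
      have hev : ∀ᶠ s in nhdsWithin t₀ (Set.Iio t₀), 0 < s := by
        have : ∀ᶠ s in nhds t₀, 0 < s := eventually_gt_nhds ht₀pos
        exact this.filter_mono nhdsWithin_le_nhds
      filter_upwards [hev, self_mem_nhdsWithin] with s hs1 hs2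
      exact hbefore s hs1.le hs2
    have hVt₀ : V t₀ = (c + ε) * Real.exp (-ρ * t₀) := le_antisymm ht₀le ht₀ge
    set K := (c + ε) * Real.exp (-ρ * t₀) with hK
    have hKpos : 0 < K := mul_pos (by linarith) (Real.exp_pos _)
    -- Razumikhin bound on the delayed sup
    have hsup : sSup ((fun θ => Real.exp (μ * θ) * V (t₀ + θ)) '' Set.Icc (-Δ) 0) ≤ K := by
      apply Real.sSup_le _ hKpos.le
      rintro x ⟨θ, hθ, rfl⟩
      obtain ⟨hθ1, hθ2⟩ := hθ
      rcases le_or_gt 0 (t₀ + θ) with hpos | hneg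
      · have h1 : V (t₀ + θ) ≤ (c + ε) * Real.exp (-ρ * (t₀ + θ)) := by
          rcases lt_or_eq_of_le (by linarith : t₀ + θ ≤ t₀) with h | h
          · exact hbefore _ hpos h
          · rw [h, ← hK]; exact le_of_eq hVt₀
        have h2 : Real.exp (μ * θ) * V (t₀ + θ) ≤
            Real.exp (μ * θ) * ((c + ε) * Real.exp (-ρ * (t₀ + θ))) :=
          mul_le_mul_of_nonneg_left h1 (Real.exp_pos _).le
        have h3 : Real.exp (μ * θ) * Real.exp (-ρ * (t₀ + θ)) ≤ Real.exp (-ρ * t₀) := by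
          rw [← Real.exp_add, Real.exp_le_exp]
          nlinarith [mul_nonneg (sub_nonneg.mpr hρμ) (neg_nonneg.mpr hθ2)]
        calc Real.exp (μ * θ) * V (t₀ + θ)
            ≤ Real.exp (μ * θ) * ((c + ε) * Real.exp (-ρ * (t₀ + θ))) := h2
          _ = (c + ε) * (Real.exp (μ * θ) * Real.exp (-ρ * (t₀ + θ))) := by ring
          _ ≤ (c + ε) * Real.exp (-ρ * t₀) :=
              mul_le_mul_of_nonneg_left h3 (by linarith)
          _ = K := hK.symm
      · have hmem : t₀ + θ ∈ Set.Icc (-Δ) 0 := ⟨by linarith, hneg.le⟩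
        have h1 : V (t₀ + θ) ≤ c := hinit _ hmem
        have h2 : Real.exp (μ * θ) ≤ Real.exp (-ρ * t₀) := by
          apply Real.exp_le_exp.mpr
          nlinarith
        calc Real.exp (μ * θ) * V (t₀ + θ) ≤ Real.exp (-ρ * t₀) * (c + ε) := by
              apply mul_le_mul h2 (by linarith) (hVnonneg _ hmem.1) (Real.exp_pos _).le
          _ = K := by rw [hK]; ring
    -- upper bound on the Dini derivative
    have hub : diniPlus V t₀ ≤ (η - γ) * K := by
      have := hdini t₀ ht₀0
      have h2 : -γ * V t₀ + η * sSup ((fun θ => Real.exp (μ * θ) * V (t₀ + θ)) ''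
          Set.Icc (-Δ) 0) ≤ -γ * K + η * K := by
        rw [hVt₀]
        have := mul_le_mul_of_nonneg_left hsup hη.le
        linarith
      calc diniPlus V t₀ ≤ _ := this
        _ ≤ -γ * K + η * K := h2
        _ = (η - γ) * K := by ring
    -- lower bound on the Dini derivative
    have hfreq : ∃ᶠ s in nhdsWithin 0 (Set.Ioi 0),
        ((c + ε) * Real.exp (-ρ * (t₀ + s)) - V t₀) / s ≤ (V (t₀ + s) - V t₀) / s := by
      rw [frequently_iff]
      intro U hU
      rw [mem_nhdsWithin] at hU
      obtain ⟨W, hWopen, hW0, hWsub⟩ := hU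
      obtain ⟨δ, hδ, hball⟩ := Metric.isOpen_iff.mp hWopen 0 hW0
      obtain ⟨x, hxS, hxlt⟩ := exists_lt_of_csInf_lt hSne (by linarith : sInf S < t₀ + δ)
      have hxge : t₀ ≤ x := csInf_le hSbd hxS
      have hxne : t₀ < x := by
        rcases lt_or_eq_of_le hxge with h | h
        · exact h
        · exfalso; rw [← h] at hxS
          exact absurd hxS.2 (not_lt.mpr (le_of_le_of_eq ht₀le hK))
      set s := x - t₀ with hs
      have hs0 : 0 < s := by simp [hs]; linarith
      have hsδ : s < δ := by simp [hs]; linarith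
      refine ⟨s, hWsub ⟨hball ?_, hs0⟩, ?_⟩
      · simp [Real.dist_eq, abs_of_pos hs0]; linarith
      · apply div_le_div_of_nonneg_right _ hs0.le
        have : (c + ε) * Real.exp (-ρ * (t₀ + s)) < V (t₀ + s) := by
          have : t₀ + s = x := by simp [hs]
          rw [this]; exact hxS.2
        linarith
    have hgtend : Tendsto (fun s => ((c + ε) * Real.exp (-ρ * (t₀ + s)) - V t₀) / s)
        (nhdsWithin 0 (Set.Ioi 0)) (nhds (-ρ * K)) := by
      have hder : HasDerivAt (fun t => (c + ε) * Real.exp (-ρ * t)) (-ρ * K) t₀ := by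
        have h1 : HasDerivAt (fun t : ℝ => -ρ * t) (-ρ) t₀ := by
          simpa using (hasDerivAt_id t₀).const_mul (-ρ)
        have h2 := (h1.exp).const_mul (c + ε)
        have hval : -ρ * K = (c + ε) * (Real.exp (-ρ * t₀) * -ρ) := by rw [hK]; ring
        rw [hval]; exact h2
      have hslope := hasDerivAt_iff_tendsto_slope.mp hder
      have hmap : Tendsto (fun s : ℝ => t₀ + s) (nhdsWithin 0 (Set.Ioi 0))
          (nhdsWithin t₀ {t₀}ᶜ) := by
        apply tendsto_nhdsWithin_of_tendsto_nhds_of_eventually_within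
        · have : Tendsto (fun s : ℝ => t₀ + s) (nhds 0) (nhds (t₀ + 0)) :=
            (continuous_const.add continuous_id).tendsto 0
          simpa using this.mono_left nhdsWithin_le_nhds
        · filter_upwards [self_mem_nhdsWithin] with s hs
          simp only [Set.mem_compl_iff, Set.mem_singleton_iff]
          intro h
          have hs0 : s = 0 := by linarith
          exact absurd hs0 (ne_of_gt hs)
      have := hslope.comp hmap
      convert this using 2 with s
      simp [slope, Function.comp, hVt₀]
      rw [hK, neg_mul ρ t₀]
      ring
    have hlb : -ρ * K ≤ diniPlus V t₀ := by
      by_cases hbdd : IsBoundedUnder (· ≤ ·) (nhdsWithin (0:ℝ) (Set.Ioi 0))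
          (fun s => (V (t₀ + s) - V t₀) / s)
      · apply le_of_forall_lt
        intro a ha
        set a' := (a + -ρ * K) / 2 with ha'def
        have ha1 : a < a' := by rw [ha'def]; linarith
        have ha2 : a' < -ρ * K := by rw [ha'def]; linarith
        have hev : ∀ᶠ s in nhdsWithin (0:ℝ) (Set.Ioi 0),
            a' < ((c + ε) * Real.exp (-ρ * (t₀ + s)) - V t₀) / s :=
          hgtend.eventually (eventually_gt_nhds ha2)
        have hfr : ∃ᶠ s in nhdsWithin (0:ℝ) (Set.Ioi 0),
            a' ≤ (V (t₀ + s) - V t₀) / s := by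
          apply (hfreq.and_eventually hev).mono
          rintro s ⟨h1, h2⟩
          linarith
        have hle := le_limsup_of_frequently_le hfr hbdd
        exact lt_of_lt_of_le ha1 hle
      · -- unbounded: limsup is junk value 0
        have hempty : {a : ℝ | ∀ᶠ s in nhdsWithin (0:ℝ) (Set.Ioi 0),
            (V (t₀ + s) - V t₀) / s ≤ a} = ∅ := by
          rw [Set.eq_empty_iff_forall_notMem]
          intro a ha
          exact hbdd ⟨a, ha⟩
        have : diniPlus V t₀ = 0 := by
          rw [diniPlus, limsup_eq, hempty, Real.sInf_empty]
        rw [this]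
        nlinarith
    have hfin := hlb.trans hub
    have hpos2 : 0 < (γ - η - ρ) * K := mul_pos (by linarith) hKpos
    linarith
  intro t ht
  have hexp : Real.exp (-ρ * t) * Real.exp (ρ * t) = 1 := by
    rw [← Real.exp_add]
    norm_num
  by_contra hcon
  push_neg at hcon
  have hd : 0 < (V t - Real.exp (-ρ * t) * c) * Real.exp (ρ * t) / 2 := by
    apply div_pos _ two_pos
    exact mul_pos (sub_pos.mpr hcon) (Real.exp_pos _)
  have hkey := key _ hd t ht
  have h3 : (V t - Real.exp (-ρ * t) * c) * Real.exp (ρ * t) * Real.exp (-ρ * t)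
      = V t - Real.exp (-ρ * t) * c := by
    rw [mul_assoc, mul_comm (Real.exp (ρ * t)), hexp, mul_one]
  nlinarith [h3, hkey, hcon]
end

section
/- (Sontag-type formula is well-defined and achieves decrease) Let λ > 0 and let p ∈ ℝ, q ∈ ℝᵐ with q ≠ 0. Define u := -((p + √(p² + λ‖q‖⁴))/‖q‖²)·q. Then p + qᵀu = -√(p² + λ‖q‖⁴) ≤ 0, and moreover p + qᵀu < 0. -/
open RealInnerProductSpace

theorem stmt_4 (m : ℕ) (lam p : ℝ) (q : EuclideanSpace ℝ (Fin m))
    (hlam : 0 < lam) (hq : q ≠ 0)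
    (u : EuclideanSpace ℝ (Fin m))
    (hu : u = (-((p + Real.sqrt (p ^ 2 + lam * ‖q‖ ^ 4)) / ‖q‖ ^ 2)) • q) :
    p + ⟪q, u⟫ = -Real.sqrt (p ^ 2 + lam * ‖q‖ ^ 4) ∧ p + ⟪q, u⟫ < 0 := by
  have hqn : (0:ℝ) < ‖q‖ := norm_pos_iff.mpr hq
  have hq2 : (‖q‖:ℝ) ^ 2 ≠ 0 := by positivity
  have hinner : ⟪q, u⟫ = (-((p + Real.sqrt (p ^ 2 + lam * ‖q‖ ^ 4)) / ‖q‖ ^ 2)) * ‖q‖ ^ 2 := by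
    rw [hu, real_inner_smul_right, real_inner_self_eq_norm_sq]
  have hkey : p + ⟪q, u⟫ = -Real.sqrt (p ^ 2 + lam * ‖q‖ ^ 4) := by
    rw [hinner]; field_simp; ring
  refine ⟨hkey, ?_⟩
  rw [hkey]
  have h1 : (0:ℝ) < lam * ‖q‖ ^ 4 := by positivity
  have h2 : (0:ℝ) < Real.sqrt (p ^ 2 + lam * ‖q‖ ^ 4) := Real.sqrt_pos.mpr (by positivity)
  linarith
end
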